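/- arXiv:math/0308204 — 2 statements merged into one kernel-verified Lean document; each statement's English description precedes it below -/
import Mathlib

section
/- Let M ⊆ ℝ^{n+1} be an open set which is weakly star-shaped with center 0. Assume there exist R > 0 and a continuously differentiable function u on B̂_{2R} := {x̂ ∈ ℝ^n : |x̂| < 2R} with u(0) = 0 and Du(0) = 0 such that for every x = (x̂, x^{n+1}) with |x̂| < R and |x^{n+1}| < R one has x ∈ M ⟺ x^{n+1} > u(x̂). Then every x ∈ M satisfies x^{n+1} > 0; i.e., M lies on one side of the tangent hyperplane {x ∈ ℝ^{n+1} : x^{n+1} = 0}. -/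
/-!
Along the ray `τ ↦ τ • x` the star-shapedness keeps `τ • x` in `M` for `0 < τ ≤ 1`, and for small
`τ` the local graph description turns this into `u (τ • x̂) < τ * x^{n+1}`. Dividing by `τ` and
letting `τ → 0⁺`, the left side tends to `Du(0) x̂ = 0`, so `x^{n+1} ≥ 0`. Since `M` is open, it
lies in the interior of the closed half-space, which is the open half-space `x^{n+1} > 0`.
-/

open Metric

/-- `M` is weakly star-shaped with center `x`. -/
def WeaklyStarShaped {d : ℕ} (M : Set (EuclideanSpace ℝ (Fin d)))
    (x : EuclideanSpace ℝ (Fin d)) : Prop :=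
  ∀ z ∈ M, ∀ τ : ℝ, 0 < τ → τ ≤ 1 → x + τ • (z - x) ∈ M

/-- The point of `ℝⁿ⁺¹` with base point `xhat ∈ ℝⁿ` and last coordinate `t`. -/
def pairPoint {n : ℕ} (xhat : EuclideanSpace ℝ (Fin n)) (t : ℝ) :
    EuclideanSpace ℝ (Fin (n + 1)) :=
  WithLp.toLp 2 (Fin.snoc (xhat : Fin n → ℝ) t)

open Filter Topology Set

lemma pairPoint_last {n : ℕ} (xhat : EuclideanSpace ℝ (Fin n)) (t : ℝ) :
    pairPoint xhat t (Fin.last n) = t := by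
  simp [pairPoint]

lemma smul_pairPoint {n : ℕ} (τ : ℝ) (xhat : EuclideanSpace ℝ (Fin n)) (t : ℝ) :
    τ • pairPoint xhat t = pairPoint (τ • xhat) (τ * t) := by
  ext i
  refine Fin.lastCases ?_ (fun j => ?_) i <;> simp [pairPoint]

lemma exists_pairPoint_eq {n : ℕ} (x : EuclideanSpace ℝ (Fin (n + 1))) :
    ∃ xhat t, pairPoint xhat t = x :=
  ⟨WithLp.toLp 2 (Fin.init x), x (Fin.last n), by simp [pairPoint, Fin.snoc_init_self]⟩

lemma HasDerivAt.le_of_eventually_le_mul {g : ℝ → ℝ} {g' s : ℝ} (hg : HasDerivAt g g' 0)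
    (hg0 : g 0 = 0) (hle : ∀ᶠ τ in 𝓝[>] 0, g τ ≤ τ * s) : g' ≤ s := by
  refine le_of_tendsto hg.tendsto_slope_zero_right ?_
  filter_upwards [hle, self_mem_nhdsWithin] with τ hτ (hτ0 : 0 < τ)
  rw [zero_add, hg0, sub_zero, smul_eq_mul, inv_mul_le_iff₀ hτ0]
  exact hτ

lemma eventually_norm_smul_lt {E : Type*} [NormedAddCommGroup E] [NormedSpace ℝ E]
    (x : E) {R : ℝ} (hR : 0 < R) : ∀ᶠ τ in 𝓝 (0 : ℝ), ‖τ • x‖ < R := by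
  have hlim : Tendsto (fun τ : ℝ => τ • x) (𝓝 0) (𝓝 0) := by
    simpa using (tendsto_id (x := 𝓝 (0 : ℝ))).smul_const x
  simpa using hlim.eventually (ball_mem_nhds 0 hR)

lemma WeaklyStarShaped.last_nonneg_of_graph {n : ℕ} {M : Set (EuclideanSpace ℝ (Fin (n + 1)))}
    (hstar : WeaklyStarShaped M 0) {R : ℝ} (hR : 0 < R) {u : EuclideanSpace ℝ (Fin n) → ℝ}
    (hu0 : u 0 = 0) (hDu : HasFDerivAt u (0 : EuclideanSpace ℝ (Fin n) →L[ℝ] ℝ) 0)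
    (hrep : ∀ xhat : EuclideanSpace ℝ (Fin n), ∀ s : ℝ, ‖xhat‖ < R → |s| < R →
      (pairPoint xhat s ∈ M ↔ u xhat < s))
    {xhat : EuclideanSpace ℝ (Fin n)} {t : ℝ} (hx : pairPoint xhat t ∈ M) : 0 ≤ t := by
  have hray : HasDerivAt (fun τ : ℝ => u (τ • xhat)) 0 0 := by
    have hline : HasDerivAt (fun τ : ℝ => τ • xhat) xhat 0 := by
      simpa using (hasDerivAt_id (0 : ℝ)).smul_const xhat
    have hDu' : HasFDerivAt u (0 : EuclideanSpace ℝ (Fin n) →L[ℝ] ℝ) ((0 : ℝ) • xhat) := by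
      simpa using hDu
    simpa [Function.comp_def] using hDu'.comp_hasDerivAt (0 : ℝ) hline
  refine hray.le_of_eventually_le_mul (by simpa using hu0) ?_
  have hsmall : ∀ᶠ τ in 𝓝 (0 : ℝ), ‖τ • xhat‖ < R ∧ |τ * t| < R ∧ τ ≤ 1 := by
    refine (eventually_norm_smul_lt xhat hR).and ((eventually_norm_smul_lt t hR).and ?_)
    exact eventually_le_nhds zero_lt_one
  filter_upwards [nhdsWithin_le_nhds hsmall, self_mem_nhdsWithin]
    with τ ⟨hxR, htR, hτ1⟩ (hτ0 : 0 < τ)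
  have hmem : τ • pairPoint xhat t ∈ M := by simpa using hstar _ hx τ hτ0 hτ1
  rw [smul_pairPoint] at hmem
  exact ((hrep _ _ hxR htR).mp hmem).le

theorem weakly_star_shaped_lies_on_one_side {n : ℕ}
    (M : Set (EuclideanSpace ℝ (Fin (n + 1))))
    (hopen : IsOpen M)
    (hstar : WeaklyStarShaped M 0)
    (R : ℝ) (hR : 0 < R)
    (u : EuclideanSpace ℝ (Fin n) → ℝ)
    (hu : ContDiffOn ℝ 1 u (ball 0 (2 * R))) (hu0 : u 0 = 0)
    (hDu0 : fderiv ℝ u 0 = 0)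
    (hrep : ∀ xhat : EuclideanSpace ℝ (Fin n), ∀ s : ℝ, ‖xhat‖ < R → |s| < R →
      (pairPoint xhat s ∈ M ↔ u xhat < s)) :
    ∀ x ∈ M, 0 < x (Fin.last n) := by
  have hDu : HasFDerivAt u (0 : EuclideanSpace ℝ (Fin n) →L[ℝ] ℝ) 0 := by
    have hdiff : DifferentiableAt ℝ u 0 :=
      (hu.contDiffAt (ball_mem_nhds 0 (by positivity))).differentiableAt one_ne_zero
    simpa [hDu0] using hdiff.hasFDerivAt
  have hnonneg : M ⊆ {x | 0 ≤ x (Fin.last n)} := by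
    intro x hx
    obtain ⟨xhat, t, rfl⟩ := exists_pairPoint_eq x
    rw [mem_ofPred_eq, pairPoint_last]
    exact hstar.last_nonneg_of_graph hR hu0 hDu hrep hx
  have hpos := hopen.subset_interior_iff.mpr hnonneg
  rwa [interior_halfSpace] at hpos
end

section
/- Let M ⊆ ℝ^n be a Lebesgue-measurable set and let (x̂, t) ∈ ℝ^n × ℝ = ℝ^{n+1} with x̂ ≠ 0. If the product set M × ℝ ⊆ ℝ^{n+1} is directed with respect to (x̂, t) (with densities taken with respect to (n+1)-dimensional Lebesgue measure and balls in ℝ^{n+1}), then M is directed with respect to x̂ (with densities taken with respect to n-dimensional Lebesgue measure and balls in ℝ^n). -/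
open MeasureTheory Metric

/-- Approximate density of a set `M` at `x` with respect to radius `ρ`. -/
noncomputable def approxDensity {d : ℕ} (M : Set (EuclideanSpace ℝ (Fin d))) (ρ : ℝ)
    (x : EuclideanSpace ℝ (Fin d)) : ENNReal :=
  volume (M ∩ ball x ρ) / volume (ball x ρ)

/-- `M` is directed with respect to `v`. -/
def DirectedWrt {d : ℕ} (M : Set (EuclideanSpace ℝ (Fin d)))
    (v : EuclideanSpace ℝ (Fin d)) : Prop :=
  ∀ x : EuclideanSpace ℝ (Fin d), ∀ ρ : ℝ, 0 < ρ →
    Antitone (fun t : ℝ => approxDensity M ρ (x + t • v))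

/-- Measure-theoretic interior. -/
def mInterior {d : ℕ} (M : Set (EuclideanSpace ℝ (Fin d))) :
    Set (EuclideanSpace ℝ (Fin d)) :=
  {x | ∃ ρ > (0 : ℝ), volume (ball x ρ \ M) = 0}

/-- Measure-theoretic exterior. -/
def mExterior {d : ℕ} (M : Set (EuclideanSpace ℝ (Fin d))) :
    Set (EuclideanSpace ℝ (Fin d)) :=
  {x | ∃ ρ > (0 : ℝ), volume (M ∩ ball x ρ) = 0}

/-- Measure-theoretic boundary. -/
def mBoundary {d : ℕ} (M : Set (EuclideanSpace ℝ (Fin d))) :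
    Set (EuclideanSpace ℝ (Fin d)) :=
  (mInterior M ∪ mExterior M)ᶜ

/-!
Directedness of a measurable set `M` with respect to `v` says exactly that `M - s • v ⊆ M` up to a
null set for every `s ≥ 0`. One direction compares the measure of `M` in a ball with that in the
translated ball; for the other, a Lebesgue density point of `(M - s • v) \ M` would have density
at most `1/2`, since this set is disjoint from `M` yet locally no larger than it. For the cylinder
over `M` and `v = (x̂, t)`, this condition is the pullback of the same condition for `M` and `x̂`
under the surjective linear projection `ℝⁿ⁺¹ → ℝⁿ`, and almost-everywhere statements descend
along surjective linear maps.
-/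

open Set Filter
open scoped ENNReal

theorem measure_eq_zero_of_forall_measure_inter_closedBall_le {β : Type*} [MetricSpace β]
    [SecondCountableTopology β] [HasBesicovitchCovering β] [MeasurableSpace β]
    [BorelSpace β] (μ : Measure β) [IsLocallyFiniteMeasure μ] {N : Set β} {c : ℝ≥0∞}
    (hc : c < 1) (hN : ∀ x, ∀ r > 0, μ (N ∩ closedBall x r) ≤ c * μ (closedBall x r)) :
    μ N = 0 := by
  by_contra hN0
  have : (ae (μ.restrict N)).NeBot := ae_neBot.2 (by simpa [Measure.restrict_eq_zero] using hN0)
  obtain ⟨x, hx⟩ := (Besicovitch.ae_tendsto_measure_inter_div μ N).exists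
  obtain ⟨r, hcr, hr⟩ := ((hx.eventually (Ioi_mem_nhds hc)).and self_mem_nhdsWithin).exists
  exact (ENNReal.div_le_of_le_mul (hN x r hr)).not_gt hcr

section Translation

variable {E : Type*} [NormedAddCommGroup E] [MeasurableSpace E] [MeasurableAdd E]
  (μ : Measure E) [μ.IsAddRightInvariant]

theorem measure_preimage_add_right_inter_ball (A : Set E) (w x : E) (r : ℝ) :
    μ ((· + w) ⁻¹' A ∩ ball x r) = μ (A ∩ ball (x + w) r) := by
  have : (· + w) ⁻¹' A ∩ ball x r = (· + w) ⁻¹' (A ∩ ball (x + w) r) := by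
    ext z
    simp
  rw [this, measure_preimage_add_right]

end Translation

section AddHaar

variable {E : Type*} [NormedAddCommGroup E] [NormedSpace ℝ E] [FiniteDimensional ℝ E]
  [MeasurableSpace E] [BorelSpace E] (μ : Measure E) [μ.IsAddHaarMeasure]

theorem measure_inter_closedBall_eq_measure_inter_ball (A : Set E) (x : E) {r : ℝ} (hr : r ≠ 0) :
    μ (A ∩ closedBall x r) = μ (A ∩ ball x r) := by
  refine measure_congr (ae_eq_refl A |>.inter ?_)
  rw [← ball_union_sphere]
  exact union_ae_eq_left_of_ae_eq_empty (ae_eq_empty.2 (Measure.addHaar_sphere_of_ne_zero μ x hr))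

theorem ae_mem_of_add_mem_of_forall_measure_inter_ball_add_le {S : Set E} (hS : MeasurableSet S)
    {w : E} (hw : ∀ x, ∀ r > 0, μ (S ∩ ball (x + w) r) ≤ μ (S ∩ ball x r)) :
    ∀ᵐ x ∂μ, x + w ∈ S → x ∈ S := by
  set N := (· + w) ⁻¹' S \ S
  suffices μ N = 0 from
    (measure_eq_zero_iff_ae_notMem.1 this).mono fun x hx hxw => not_not.1 fun hxS => hx ⟨hxw, hxS⟩
  refine measure_eq_zero_of_forall_measure_inter_closedBall_le μ
    (ENNReal.inv_lt_one.2 ENNReal.one_lt_two) fun x r hr => ?_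
  have hNS : μ (N ∩ ball x r) ≤ μ (S ∩ ball x r) :=
    calc μ (N ∩ ball x r) ≤ μ ((· + w) ⁻¹' S ∩ ball x r) :=
          measure_mono (inter_subset_inter_left _ sdiff_subset)
      _ = μ (S ∩ ball (x + w) r) := measure_preimage_add_right_inter_ball μ S w x r
      _ ≤ μ (S ∩ ball x r) := hw x r hr
  have hsum : μ (N ∩ ball x r) + μ (S ∩ ball x r) ≤ μ (ball x r) := by
    rw [← measure_union (disjoint_sdiff_left.mono inter_subset_left inter_subset_left)
      (hS.inter measurableSet_ball)]
    exact measure_mono (union_subset inter_subset_right inter_subset_right)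
  have hball : μ (closedBall x r) = μ (ball x r) := by
    simpa using measure_inter_closedBall_eq_measure_inter_ball μ univ x hr.ne'
  rw [measure_inter_closedBall_eq_measure_inter_ball μ N x hr.ne', hball, ← ENNReal.div_eq_inv_mul,
    ENNReal.le_div_iff_mul_le (.inl two_ne_zero) (.inl ENNReal.ofNat_ne_top), mul_two]
  exact (add_le_add_right hNS _).trans hsum

end AddHaar

theorem approxDensity_le_approxDensity_iff {d : ℕ} (M : Set (EuclideanSpace ℝ (Fin d)))
    {ρ : ℝ} (hρ : 0 < ρ) (x y : EuclideanSpace ℝ (Fin d)) :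
    approxDensity M ρ x ≤ approxDensity M ρ y ↔ volume (M ∩ ball x ρ) ≤ volume (M ∩ ball y ρ) := by
  have h0 : volume (ball y ρ) ≠ 0 := (measure_ball_pos volume y hρ).ne'
  have htop : volume (ball y ρ) ≠ ⊤ := measure_ball_lt_top.ne
  rw [approxDensity, approxDensity, Measure.addHaar_ball_center volume x,
    ← Measure.addHaar_ball_center volume y, ENNReal.div_le_iff h0 htop,
    ENNReal.div_mul_cancel h0 htop]

theorem directedWrt_iff_forall_ae {d : ℕ} {M : Set (EuclideanSpace ℝ (Fin d))}
    (hM : MeasurableSet M) (v : EuclideanSpace ℝ (Fin d)) :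
    DirectedWrt M v ↔ ∀ s : ℝ, 0 ≤ s → ∀ᵐ x, x + s • v ∈ M → x ∈ M := by
  constructor
  · intro hdir s hs
    refine ae_mem_of_add_mem_of_forall_measure_inter_ball_add_le volume hM fun x r hr => ?_
    have h : approxDensity M r (x + s • v) ≤ approxDensity M r (x + (0 : ℝ) • v) := hdir x r hr hs
    rwa [zero_smul, add_zero, approxDensity_le_approxDensity_iff M hr] at h
  · intro hae x ρ hρ τ₁ τ₂ hτ
    have hx : x + τ₂ • v = x + τ₁ • v + (τ₂ - τ₁) • v := by
      rw [add_assoc, ← add_smul, add_sub_cancel]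
    show approxDensity M ρ (x + τ₂ • v) ≤ approxDensity M ρ (x + τ₁ • v)
    rw [approxDensity_le_approxDensity_iff M hρ, hx, ← measure_preimage_add_right_inter_ball]
    exact measure_mono_ae (ae_le_set_inter (hae _ (sub_nonneg.2 hτ)) EventuallyLE.rfl)

def initLinearMap (n : ℕ) : EuclideanSpace ℝ (Fin (n + 1)) →ₗ[ℝ] EuclideanSpace ℝ (Fin n) where
  toFun y := WithLp.toLp 2 (Fin.init y)
  map_add' _ _ := rfl
  map_smul' _ _ := rfl

theorem initLinearMap_pairPoint {n : ℕ} (x : EuclideanSpace ℝ (Fin n)) (t : ℝ) :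
    initLinearMap n (pairPoint x t) = x :=
  congrArg (WithLp.toLp 2) (Fin.init_snoc (α := fun _ => ℝ) _ _)

theorem initLinearMap_surjective (n : ℕ) : Function.Surjective (initLinearMap n) :=
  fun x => ⟨pairPoint x 0, initLinearMap_pairPoint x 0⟩

theorem direction_of_cylinder_projects_general {n : ℕ}
    (M : Set (EuclideanSpace ℝ (Fin n))) (hM : MeasurableSet M)
    (xhat : EuclideanSpace ℝ (Fin n)) (t : ℝ)
    (hdir : DirectedWrt
      {y : EuclideanSpace ℝ (Fin (n + 1)) |
        (WithLp.toLp 2 (fun i : Fin n => y i.castSucc) : EuclideanSpace ℝ (Fin n)) ∈ M}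
      (pairPoint xhat t)) :
    DirectedWrt M xhat := by
  have hcyl : MeasurableSet (initLinearMap n ⁻¹' M) :=
    hM.preimage (initLinearMap n).continuous_of_finiteDimensional.measurable
  rw [directedWrt_iff_forall_ae hM]
  intro s hs
  have h := (directedWrt_iff_forall_ae hcyl _).1 hdir s hs
  simp only [mem_preimage, map_add, map_smul, initLinearMap_pairPoint] at h
  exact (ae_comp_linearMap_mem_iff (initLinearMap n) volume volume (initLinearMap_surjective n)
    ((hM.preimage (measurable_add_const _)).imp hM)).1 h

theorem direction_of_cylinder_projects {n : ℕ}
    (M : Set (EuclideanSpace ℝ (Fin n))) (hM : MeasurableSet M)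
    (xhat : EuclideanSpace ℝ (Fin n)) (t : ℝ) (hxhat : xhat ≠ 0)
    (hdir : DirectedWrt
      {y : EuclideanSpace ℝ (Fin (n + 1)) |
        (WithLp.toLp 2 (fun i : Fin n => y i.castSucc) : EuclideanSpace ℝ (Fin n)) ∈ M}
      (pairPoint xhat t)) :
    DirectedWrt M xhat :=
  direction_of_cylinder_projects_general M hM xhat t hdir
end
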